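/- arXiv:2112.14507 — 2 statements merged into one kernel-verified Lean document; each statement's English description precedes it below -/
import Mathlib

section
/- Let φ_h : ℝⁿ × ℝᵐ → ℝⁿ be smooth with φ_h(0,0) = 0, let V : ℝⁿ → ℝ be smooth, Q positive semidefinite, R positive definite, h > 0, and u* : ℝⁿ → ℝᵐ smooth with u*(0) = 0. Suppose for all x in a neighborhood of 0: (i) (∂/∂u)[V(φ_h(x,u)) + h xᵀQx + h uᵀRu] = 0 at u = u*(x), with the function u ↦ V(φ_h(x,u)) + h xᵀQx + h uᵀRu convex; and (ii) the gradient identity (∂V/∂x)(x)ᵀ = (∂/∂x)[V(φ_h(x, u*(x))) + h xᵀQx + h u*(x)ᵀR u*(x)]ᵀ holds. Then the function x ↦ V(x) − V(φ_h(x, u*(x))) − h xᵀQx − h u*(x)ᵀR u*(x) is constant on that (connected) neighborhood, and if V(0) = 0 it is identically zero, so V satisfies the Bellman equation V(x) = min_u [V(φ_h(x,u)) + h xᵀQx + h uᵀRu] with minimizer u*(x). -/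
open Matrix

private lemma quad_contDiff {k : ℕ} (M : Matrix (Fin k) (Fin k) ℝ) :
    ContDiff ℝ (⊤ : ℕ∞) (fun v : Fin k → ℝ => v ⬝ᵥ M *ᵥ v) := by
  simp only [dotProduct, mulVec]
  exact ContDiff.sum fun i _ =>
    (contDiff_apply ℝ ℝ i).mul (ContDiff.sum fun j _ =>
      contDiff_const.mul (contDiff_apply ℝ ℝ j))

/-- HJB verification (Proposition 7): if `u*` is a stationary point of the convex
function `u ↦ V(φ_h(x,u)) + h xᵀQx + h uᵀRu` and the envelope gradient identity
holds, then `V(x) − V(φ_h(x,u*(x))) − h xᵀQx − h u*(x)ᵀRu*(x)` is constant on a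
connected neighborhood of `0`, and if `V 0 = 0` then `V` satisfies the Bellman
equation with minimizer `u*`. -/
theorem stmt11 {n m : ℕ}
    (φh : (Fin n → ℝ) → (Fin m → ℝ) → Fin n → ℝ)
    (hφh : ContDiff ℝ (⊤ : ℕ∞) (fun p : (Fin n → ℝ) × (Fin m → ℝ) => φh p.1 p.2))
    (hφh0 : φh 0 0 = 0)
    (V : (Fin n → ℝ) → ℝ) (hV : ContDiff ℝ (⊤ : ℕ∞) V)
    (Q : Matrix (Fin n) (Fin n) ℝ) (hQ : Q.PosSemidef)
    (R : Matrix (Fin m) (Fin m) ℝ) (hR : R.PosDef)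
    (h : ℝ) (hh : 0 < h)
    (ustar : (Fin n → ℝ) → Fin m → ℝ) (hustar : ContDiff ℝ (⊤ : ℕ∞) ustar)
    (hustar0 : ustar 0 = 0)
    (Ω : Set (Fin n → ℝ)) (hΩopen : IsOpen Ω) (hΩconn : IsConnected Ω)
    (hΩ0 : (0 : Fin n → ℝ) ∈ Ω)
    (W : (Fin n → ℝ) → (Fin m → ℝ) → ℝ)
    (hW : ∀ x u, W x u = V (φh x u) + h * (x ⬝ᵥ Q *ᵥ x) + h * (u ⬝ᵥ R *ᵥ u))
    -- (i) stationarity and convexity in `u`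
    (hstat : ∀ x ∈ Ω, fderiv ℝ (fun u => W x u) (ustar x) = 0)
    (hconv : ∀ x ∈ Ω, ConvexOn ℝ Set.univ (fun u => W x u))
    -- (ii) the envelope gradient identity
    (hgrad : ∀ x ∈ Ω, fderiv ℝ V x = fderiv ℝ (fun x' => W x' (ustar x')) x) :
    (∃ c : ℝ, ∀ x ∈ Ω, V x - W x (ustar x) = c) ∧
    (V 0 = 0 → ∀ x ∈ Ω,
      V x = W x (ustar x) ∧ ∀ u : Fin m → ℝ, W x (ustar x) ≤ W x u) := by
  -- smoothness of W as a function of the pair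
  have hWpair : ContDiff ℝ (⊤ : ℕ∞) (fun p : (Fin n → ℝ) × (Fin m → ℝ) => W p.1 p.2) := by
    have : (fun p : (Fin n → ℝ) × (Fin m → ℝ) => W p.1 p.2) =
        fun p => V (φh p.1 p.2) + h * (p.1 ⬝ᵥ Q *ᵥ p.1) + h * (p.2 ⬝ᵥ R *ᵥ p.2) := by
      funext p; exact hW p.1 p.2
    rw [this]
    exact ((hV.comp hφh).add
      (contDiff_const.mul ((quad_contDiff Q).comp contDiff_fst))).add
      (contDiff_const.mul ((quad_contDiff R).comp contDiff_snd))
  have hWx : ∀ x, ContDiff ℝ (⊤ : ℕ∞) (fun u => W x u) := fun x =>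
    hWpair.comp (ContDiff.prodMk (contDiff_const (c := x)) contDiff_id)
  have hWu : ContDiff ℝ (⊤ : ℕ∞) (fun x' => W x' (ustar x')) :=
    hWpair.comp (contDiff_id.prodMk hustar)
  -- the function F := V - W(·, u*(·)) has zero derivative on Ω
  set F : (Fin n → ℝ) → ℝ := fun x => V x - W x (ustar x) with hF
  have hFdiff : Differentiable ℝ F :=
    (hV.differentiable (by simp)).sub (hWu.differentiable (by simp))
  have hFderiv : ∀ x ∈ Ω, fderiv ℝ F x = 0 := by
    intro x hx
    rw [hF]
    rw [fderiv_fun_sub ((hV.differentiable (by simp)) x) ((hWu.differentiable (by simp)) x),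
      hgrad x hx, sub_self]
  -- F is locally constant on Ω
  haveI : PreconnectedSpace Ω := Subtype.preconnectedSpace hΩconn.isPreconnected
  have hloc : IsLocallyConstant (fun x : Ω => F x.1) := by
    rw [IsLocallyConstant.iff_exists_open]
    rintro ⟨x, hx⟩
    obtain ⟨ε, hε, hball⟩ := Metric.isOpen_iff.1 hΩopen x hx
    refine ⟨Subtype.val ⁻¹' Metric.ball x ε,
      (Metric.isOpen_ball).preimage continuous_subtype_val, Metric.mem_ball_self hε, ?_⟩
    rintro ⟨y, hy⟩ hy'
    refine (convex_ball x ε).is_const_of_fderivWithin_eq_zero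
      (hFdiff.differentiableOn) (fun z hz => ?_) hy' (Metric.mem_ball_self hε)
    rw [fderivWithin_of_isOpen Metric.isOpen_ball hz]
    exact hFderiv z (hball hz)
  have hconst : ∀ x ∈ Ω, F x = F 0 := fun x hx =>
    hloc.apply_eq_of_preconnectedSpace ⟨x, hx⟩ ⟨0, hΩ0⟩
  constructor
  · exact ⟨F 0, hconst⟩
  · intro hV0 x hx
    have hW00 : W 0 (ustar 0) = 0 := by
      rw [hustar0, hW, hφh0, hV0]
      simp
    have hF0 : F 0 = 0 := by rw [hF]; simp [hV0, hW00]
    have hVx : V x = W x (ustar x) := by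
      have h1 := hconst x hx
      rw [hF0] at h1
      have h2 : V x - W x (ustar x) = 0 := h1
      linarith
    refine ⟨hVx, fun u => ?_⟩
    -- minimality via convexity along a line
    rcases eq_or_ne u (ustar x) with rfl | hne
    · exact le_rfl
    · have hcx := hconv x hx
      set L : ℝ →ᵃ[ℝ] (Fin m → ℝ) := AffineMap.lineMap (ustar x) u with hL
      have hgc : ConvexOn ℝ Set.univ (fun t => W x (L t)) := by
        have := hcx.comp_affineMap L
        exact this
      have hd : HasDerivAt (fun t => W x (L t)) 0 0 := by
        have hLd : HasDerivAt (fun t : ℝ => L t) (u - ustar x) 0 := by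
          have : (fun t : ℝ => L t) = fun t => t • (u - ustar x) + ustar x := by
            funext t; simp [hL, AffineMap.lineMap_apply]
          rw [this]
          simpa using ((hasDerivAt_id (0:ℝ)).smul_const (u - ustar x)).add_const (ustar x)
        have hWd : HasFDerivAt (fun u' => W x u') (fderiv ℝ (fun u' => W x u') (L 0)) (L 0) :=
          ((hWx x).differentiable (by simp) (L 0)).hasFDerivAt
        have := hWd.comp_hasDerivAt 0 hLd
        have hL0 : L 0 = ustar x := by simp [hL]
        rw [hL0] at this
        simpa [hstat x hx, Function.comp_def] using this
      have := hgc.le_slope_of_hasDerivAt (Set.mem_univ 0) (Set.mem_univ 1) one_pos hd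
      have hslope : slope (fun t => W x (L t)) 0 1 = W x u - W x (ustar x) := by
        simp [slope, hL]
      rw [hslope] at this
      linarith
end

section
/- Let A be an n×n real matrix and B an n×m real matrix such that the pair (A, B) is controllable. Then for all sufficiently small h > 0, the pair (A_h, B_h) with A_h = e^{Ah} and B_h = (∫₀ʰ e^{Aτ} dτ)B is controllable. -/
open Matrix

/-- The controllability matrix `[B, AB, …, A^{n−1}B]`. -/
noncomputable def ctrbMatrix {n m : ℕ} (A : Matrix (Fin n) (Fin n) ℝ)
    (B : Matrix (Fin n) (Fin m) ℝ) : Matrix (Fin n) (Fin n × Fin m) ℝ :=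
  Matrix.of fun i kj => (A ^ (kj.1 : ℕ) * B) i kj.2

/-!
As `h → 0⁺`, `h⁻¹ (e^{hA} - 1) → A` and `h⁻¹ ∫₀ʰ e^{τA} dτ → 1`, so the rescaled pair
`(h⁻¹ (A_h - 1), h⁻¹ B_h)` tends to `(A, B)`. Full row rank of `M` is an open condition, being
`det (M Mᵀ) ≠ 0`, so the rescaled pair is controllable for small `h`. Its controllability matrix
is that of `(A_h, B_h)` times a matrix, because `(A_h - 1)^k` with `k < n` is a polynomial of
degree `< n` in `A_h`.
-/

open Filter Topology Polynomial
open scoped Kronecker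

namespace Matrix

theorem rank_eq_card_iff_isUnit_det {K n : Type*} [Field K] [Fintype n] [DecidableEq n]
    (P : Matrix n n K) : P.rank = Fintype.card n ↔ IsUnit P.det := by
  rw [← isUnit_iff_isUnit_det, ← mulVec_surjective_iff_isUnit,
    ← Module.finrank_fintype_fun_eq_card K, rank, ← Submodule.eq_top_iff_finrank_eq,
    LinearMap.range_eq_top]
  rfl

theorem isOpen_setOf_rank_eq_card {K m ι : Type*} [Field K] [LinearOrder K]
    [IsStrictOrderedRing K] [TopologicalSpace K] [IsTopologicalRing K] [T1Space K] [Fintype m]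
    [DecidableEq m] [Fintype ι] :
    IsOpen {M : Matrix m ι K | M.rank = Fintype.card m} := by
  have hdet : {M : Matrix m ι K | M.rank = Fintype.card m} =
      (fun M => (M * Mᵀ).det) ⁻¹' {0}ᶜ := Set.ext fun M => by
    rw [Set.mem_ofPred_eq, ← rank_self_mul_transpose, rank_eq_card_iff_isUnit_det]
    exact isUnit_iff_ne_zero
  rw [hdet]
  exact isOpen_compl_singleton.preimage (by fun_prop)

section Exp

variable {ι : Type*} [Fintype ι] [DecidableEq ι]

theorem continuous_exp_smul (A : Matrix ι ι ℝ) :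
    Continuous fun t : ℝ => NormedSpace.exp (t • A) := by
  -- any normed algebra structure on matrices induces their product topology
  let := Matrix.linftyOpNormedRing (n := ι) (α := ℝ)
  let := Matrix.linftyOpNormedAlgebra (n := ι) (R := ℝ) (α := ℝ)
  exact continuous_iff_continuousAt.2 fun t =>
    (hasDerivAt_exp_smul_const (𝕂 := ℝ) A t).continuousAt

theorem tendsto_inv_smul_exp_smul_sub_one (A : Matrix ι ι ℝ) :
    Tendsto (fun h : ℝ => h⁻¹ • (NormedSpace.exp (h • A) - 1)) (𝓝[≠] 0) (𝓝 A) := by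
  let := Matrix.linftyOpNormedRing (n := ι) (α := ℝ)
  let := Matrix.linftyOpNormedAlgebra (n := ι) (R := ℝ) (α := ℝ)
  have := hasDerivAt_iff_tendsto_slope_zero.1 (hasDerivAt_exp_smul_const (𝕂 := ℝ) A 0)
  simp only [zero_add, zero_smul, NormedSpace.exp_zero, one_mul] at this
  exact this

end Exp

theorem tendsto_inv_smul_integral {ι κ : Type*} {f : ℝ → Matrix ι κ ℝ} (hf : Continuous f) :
    Tendsto (fun h : ℝ => h⁻¹ • of fun i j => ∫ τ in (0:ℝ)..h, f τ i j) (𝓝[≠] 0) (𝓝 (f 0)) := by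
  refine tendsto_pi_nhds.2 fun i => tendsto_pi_nhds.2 fun j => ?_
  simpa using hasDerivAt_iff_tendsto_slope_zero.1
    ((hf.matrix_elem i j).integral_hasStrictDerivAt 0 0).hasDerivAt

end Matrix

theorem continuous_ctrbMatrix {n m : ℕ} :
    Continuous fun p : Matrix (Fin n) (Fin n) ℝ × Matrix (Fin n) (Fin m) ℝ => ctrbMatrix p.1 p.2 :=
  continuous_matrix fun _ _ => ((continuous_fst.pow _).matrix_mul continuous_snd).matrix_elem _ _

theorem ctrbMatrix_eq_mul_kronecker {n m : ℕ} {A A' : Matrix (Fin n) (Fin n) ℝ}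
    {B B' : Matrix (Fin n) (Fin m) ℝ} (c : Matrix (Fin n) (Fin n) ℝ)
    (h : ∀ k : Fin n, A' ^ (k : ℕ) * B' = ∑ l, c k l • (A ^ (l : ℕ) * B)) :
    ctrbMatrix A' B' = ctrbMatrix A B * (cᵀ ⊗ₖ (1 : Matrix (Fin m) (Fin m) ℝ)) := by
  ext i ⟨k, j⟩
  rw [mul_apply, Fintype.sum_prod_type]
  simp [ctrbMatrix, h, Matrix.sum_apply, one_apply, mul_comm]

theorem exists_ctrbMatrix_smul_sub_one_eq_mul {n m : ℕ} (c : ℝ) (A : Matrix (Fin n) (Fin n) ℝ)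
    (B : Matrix (Fin n) (Fin m) ℝ) :
    ∃ S : Matrix (Fin n × Fin m) (Fin n × Fin m) ℝ,
      ctrbMatrix (c • (A - 1)) (c • B) = ctrbMatrix A B * S := by
  refine ⟨_, ctrbMatrix_eq_mul_kronecker
    (of fun k l => c ^ ((k : ℕ) + 1) * (((X - 1 : ℝ[X]) ^ (k : ℕ)).coeff l)) fun k => ?_⟩
  have hdeg : ((X - 1 : ℝ[X]) ^ (k : ℕ)).natDegree < n := by
    rw [← C_1, natDegree_pow, natDegree_X_sub_C, mul_one]
    exact k.isLt
  calc (c • (A - 1)) ^ (k : ℕ) * (c • B)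
      = c ^ ((k : ℕ) + 1) • (aeval A ((X - 1 : ℝ[X]) ^ (k : ℕ)) * B) := by
        simp [_root_.smul_pow, pow_succ, smul_smul, mul_comm]
    _ = _ := by
        rw [aeval_eq_sum_range' hdeg, ← Fin.sum_univ_eq_sum_range]
        simp only [of_apply, Matrix.sum_mul, Finset.smul_sum, Matrix.smul_mul, smul_smul]

theorem rank_ctrbMatrix_eq_of_smul_sub_one {n m : ℕ} {c : ℝ} {A : Matrix (Fin n) (Fin n) ℝ}
    {B : Matrix (Fin n) (Fin m) ℝ} (h : (ctrbMatrix (c • (A - 1)) (c • B)).rank = n) :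
    (ctrbMatrix A B).rank = n := by
  obtain ⟨S, hS⟩ := exists_ctrbMatrix_smul_sub_one_eq_mul c A B
  refine le_antisymm ?_ ?_
  · simpa using rank_le_card_height (ctrbMatrix A B)
  · calc n = _ := h.symm
      _ ≤ _ := hS ▸ rank_mul_le_left _ _

/-- If `(A, B)` is controllable, then the exact zero-order-hold discretization
`(A_h, B_h) = (e^{Ah}, (∫₀ʰ e^{Aτ} dτ) B)` is controllable for all small `h > 0`. -/
theorem stmt13 {n m : ℕ}
    (A : Matrix (Fin n) (Fin n) ℝ) (B : Matrix (Fin n) (Fin m) ℝ)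
    (hctrb : (ctrbMatrix A B).rank = n) :
    ∃ h₀ > (0:ℝ), ∀ h : ℝ, 0 < h → h < h₀ →
      (ctrbMatrix (NormedSpace.exp (h • A))
        ((Matrix.of fun i j => ∫ τ in (0:ℝ)..h, NormedSpace.exp (τ • A) i j)
          * B)).rank = n := by
  set G : ℝ → Matrix (Fin n) (Fin n) ℝ :=
    fun h => Matrix.of fun i j => ∫ τ in (0:ℝ)..h, NormedSpace.exp (τ • A) i j
  have hG : Tendsto (fun h : ℝ => h⁻¹ • (G h * B)) (𝓝[≠] 0) (𝓝 B) := by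
    have h1 := tendsto_inv_smul_integral (continuous_exp_smul A)
    rw [zero_smul, NormedSpace.exp_zero] at h1
    have hB := ((continuous_id.matrix_mul (continuous_const (y := B))).tendsto 1).comp h1
    simpa only [Function.comp_def, id_eq, Matrix.one_mul, Matrix.smul_mul] using hB
  have hlim : Tendsto (fun h : ℝ => (h⁻¹ • (NormedSpace.exp (h • A) - 1), h⁻¹ • (G h * B)))
      (𝓝[>] 0) (𝓝 (A, B)) :=
    ((tendsto_inv_smul_exp_smul_sub_one A).prodMk_nhds hG).mono_left (nhdsGT_le_nhdsNE 0)
  have hopen : IsOpen {M : Matrix (Fin n) (Fin n × Fin m) ℝ | M.rank = n} := by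
    simpa using isOpen_setOf_rank_eq_card (K := ℝ) (m := Fin n) (ι := Fin n × Fin m)
  have hev : ∀ᶠ h in 𝓝[>] 0,
      (ctrbMatrix (h⁻¹ • (NormedSpace.exp (h • A) - 1)) (h⁻¹ • (G h * B))).rank = n :=
    (continuous_ctrbMatrix.tendsto (A, B)).comp hlim (hopen.mem_nhds hctrb)
  obtain ⟨h₀, hh₀, hsub⟩ := mem_nhdsGT_iff_exists_Ioo_subset.1 hev
  exact ⟨h₀, hh₀, fun h hpos hlt => rank_ctrbMatrix_eq_of_smul_sub_one (hsub ⟨hpos, hlt⟩)⟩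
end
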